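/- arXiv:1901.04838 — 4 statements merged into one kernel-verified Lean document; each statement's English description precedes it below -/
import Mathlib

section
/- If q is a positive integer with gcd(q, 2m) = 1, then G(q,m,n) = e(-(4m)^{-1} n^2 / q) * (m/q) * G(q,1,0), where (4m)^{-1} denotes the inverse of 4m modulo q, (m/q) is the Jacobi symbol, and e(t) = exp(2πi t). -/
open Complex Finset

noncomputable def e (t : ℝ) : ℂ := Complex.exp (2 * Real.pi * Complex.I * t)

noncomputable def G (q : ℕ) (m n : ℤ) : ℂ :=
  ∑ x ∈ Finset.Icc 1 q, e ((m * (x : ℤ) ^ 2 + n * x : ℤ) / (q : ℝ))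

/-!
Completing the square (`x ↦ x + 2bn`, using `4mb ≡ 1`) turns `G(q,m,n)` into
`e(-bn²/q) · G(q,m,0)`, so everything rests on the twist `G(q,m,0) = (m/q) · G(q,1,0)`.

For an odd prime `p` the number of square roots of `y` is `1 + (y/p)`, so
`∑ₓ e(mx²/p) = ∑_y (y/p) e(my/p)`, and substituting `y ↦ m⁻¹y` pulls out `(m/p)`.
Writing `x = y + dsz` modulo `d²s`, the sum over `z` vanishes unless `d ∣ y`, whence
`G(d²s,m,0) = d · G(s,m,0)` when `gcd(d, 2m) = 1`; this matches `(m/p²) = 1`.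
Finally `x = ru + pv` splits `G(pr,m,0)` into `G(p,mr,0) · G(r,mp,0)` for coprime `p, r`, and the
extra factors `(r/p)(p/r)` are the same for `m` and for `1`.
-/

section FiniteField

variable {F R : Type*} [Field F] [Fintype F] [DecidableEq F] [CommRing R] [IsDomain R]

theorem sum_addChar_mul_sq_eq_gaussSum (hF : ringChar F ≠ 2) {ψ : AddChar F R}
    (hψ : ψ.IsPrimitive) {a : F} (ha : a ≠ 0) :
    ∑ x, ψ (a * x ^ 2) =
      gaussSum ((quadraticChar F).ringHomComp (Int.castRingHom R)) (ψ.mulShift a) := by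
  have hcard (y : F) : (#{x | x ^ 2 = y} : R) = quadraticChar F y + 1 := by
    rw [← Int.cast_natCast, ← Set.toFinset_ofPred, quadraticChar_card_sqrts hF y]
    push_cast
    rfl
  calc ∑ x, ψ (a * x ^ 2)
      = ∑ y, (#{x | x ^ 2 = y} : R) * ψ (a * y) := by
        rw [← sum_fiberwise univ (· ^ 2)]
        refine sum_congr rfl fun y _ => ?_
        rw [sum_congr rfl fun x hx => by rw [(mem_filter.mp hx).2], sum_const, nsmul_eq_mul]
    _ = ∑ y, (quadraticChar F y : R) * ψ (a * y) + ∑ y, ψ (y * a) := by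
        simp only [hcard, add_mul, one_mul, sum_add_distrib, mul_comm a]
    _ = _ := by
        rw [AddChar.sum_mulShift a hψ, if_neg ha, Nat.cast_zero, add_zero]
        rfl

theorem sum_addChar_mul_sq (hF : ringChar F ≠ 2) {ψ : AddChar F R}
    (hψ : ψ.IsPrimitive) {a : F} (ha : a ≠ 0) :
    ∑ x, ψ (a * x ^ 2) = quadraticChar F a * ∑ x, ψ (x ^ 2) := by
  have hsq := sum_addChar_mul_sq_eq_gaussSum hF hψ one_ne_zero
  simp only [one_mul, AddChar.mulShift_one] at hsq
  rw [sum_addChar_mul_sq_eq_gaussSum hF hψ ha, hsq, ← Units.val_mk0 ha, gaussSum_mulShift_eq,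
    ((quadraticChar_isQuadratic F).comp _).inv]
  rfl

end FiniteField

theorem AddChar.sum_quadratic_complete_sq {R M : Type*} [CommRing R] [Fintype R]
    [CommSemiring M] (ψ : AddChar R M) {a b : R} (hab : 4 * a * b = 1) (n : R) :
    ∑ x, ψ (a * x ^ 2 + n * x) = ψ (-(b * n ^ 2)) * ∑ x, ψ (a * x ^ 2) := by
  have hsq (x : R) : a * (x + 2 * b * n) ^ 2 = (a * x ^ 2 + n * x) + b * n ^ 2 := by
    linear_combination (n * x + b * n ^ 2) * hab
  rw [← Equiv.sum_comp (Equiv.addRight (2 * b * n)) (fun x => ψ (a * x ^ 2)), mul_sum]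
  refine sum_congr rfl fun x _ => ?_
  rw [Equiv.coe_addRight, hsq, ← AddChar.map_add_eq_mul, neg_add_cancel_comm_assoc]

namespace ZMod

variable {R : Type*} [AddCommMonoid R]

theorem sum_Icc_one_natCast {N : ℕ} [NeZero N] (g : ZMod N → R) :
    ∑ x ∈ Icc 1 N, g x = ∑ y, g y := by
  refine sum_nbij' (fun x : ℕ => (x : ZMod N)) (fun y => if y = 0 then N else y.val)
    (fun _ _ => mem_univ _) (fun y _ => ?_) (fun x hx => ?_) (fun y _ => ?_) (fun _ _ => rfl)
  · split_ifs with hy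
    · exact mem_Icc.mpr ⟨NeZero.one_le, le_rfl⟩
    · exact mem_Icc.mpr ⟨val_pos.mpr hy, (val_lt y).le⟩
  · obtain ⟨hx1, hxN⟩ := mem_Icc.mp hx
    rcases hxN.lt_or_eq with hlt | rfl
    · have hx0 : (x : ZMod N) ≠ 0 := by
        rw [← val_ne_zero, val_cast_of_lt hlt]
        omega
      simp only [if_neg hx0, val_cast_of_lt hlt]
    · simp
  · split_ifs with hy
    · simp [hy]
    · exact natCast_zmod_val y

theorem sum_val_eq_sum_sum_add_mul {M d N : ℕ} [NeZero M] [NeZero d] [NeZero N]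
    (h : M * d = N) (f : ℕ → R) :
    ∑ x : ZMod N, f x.val = ∑ y : ZMod M, ∑ z : ZMod d, f (y.val + M * z.val) := by
  have hlt (y : ZMod M) (z : ZMod d) : y.val + M * z.val < N := by
    have := val_lt y
    have := val_lt z
    subst h
    nlinarith
  let Φ (yz : ZMod M × ZMod d) : ZMod N := (yz.1.val + M * yz.2.val : ℕ)
  have hΦ (yz : ZMod M × ZMod d) : (Φ yz).val = yz.1.val + M * yz.2.val :=
    val_cast_of_lt (hlt _ _)
  have hbij : Function.Bijective Φ := by
    refine (Fintype.bijective_iff_injective_and_card Φ).mpr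
      ⟨fun ⟨y, z⟩ ⟨y', z'⟩ hyz => ?_, ?_⟩
    · have hv := congrArg val hyz
      simp only [hΦ] at hv
      have hM : 0 < M := NeZero.pos M
      have hy : y.val = y'.val := by
        simpa [Nat.add_mul_mod_self_left, Nat.mod_eq_of_lt (val_lt _)] using congrArg (· % M) hv
      have hz : z.val = z'.val := by
        simpa [Nat.add_mul_div_left _ _ hM, Nat.div_eq_of_lt (val_lt _)] using congrArg (· / M) hv
      exact Prod.ext (val_injective _ hy) (val_injective _ hz)
    · simp [card, h]
  rw [← Fintype.sum_prod_type', ← Fintype.sum_bijective Φ hbij _ _ fun yz => by rw [hΦ]]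

theorem sum_eq_sum_sum_of_coprime {p r : ℕ} [NeZero p] [NeZero r] (h : p.Coprime r)
    (f : ZMod (p * r) → R) :
    ∑ x, f x = ∑ u : ZMod p, ∑ v : ZMod r, f (r * u.val + p * v.val) := by
  let Φ (uv : ZMod p × ZMod r) : ZMod (p * r) := r * uv.1.val + p * uv.2.val
  have hp (uv : ZMod p × ZMod r) : castHom (dvd_mul_right p r) (ZMod p) (Φ uv) = r * uv.1 := by
    simp only [Φ, map_add, map_mul, map_natCast, natCast_self, zero_mul, add_zero,
      natCast_zmod_val]
  have hr (uv : ZMod p × ZMod r) : castHom (dvd_mul_left r p) (ZMod r) (Φ uv) = p * uv.2 := by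
    simp only [Φ, map_add, map_mul, map_natCast, natCast_self, zero_mul, zero_add,
      natCast_zmod_val]
  have hbij : Function.Bijective Φ := by
    refine (Fintype.bijective_iff_injective_and_card Φ).mpr ⟨fun uv uv' huv => ?_, ?_⟩
    · refine Prod.ext ?_ ?_
      · have := congrArg (castHom (dvd_mul_right p r) (ZMod p)) huv
        rw [hp, hp] at this
        exact ((isUnit_iff_coprime r p).mpr h.symm).mul_left_cancel this
      · have := congrArg (castHom (dvd_mul_left r p) (ZMod r)) huv
        rw [hr, hr] at this
        exact ((isUnit_iff_coprime p r).mpr h).mul_left_cancel this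
    · simp [card]
  rw [← Fintype.sum_prod_type', ← Fintype.sum_bijective Φ hbij _ _ fun _ => rfl]

theorem stdAddChar_natCast_mul {N M : ℕ} [NeZero N] [NeZero M] (k : ℕ) (hk : N * k = M)
    (x : ZMod M) :
    stdAddChar ((k : ZMod M) * x) = stdAddChar (castHom (Dvd.intro k hk) (ZMod N) x) := by
  obtain ⟨j, rfl⟩ := intCast_surjective x
  have hk0 : (k : ℂ) ≠ 0 := by
    have := NeZero.ne M
    subst hk
    exact_mod_cast right_ne_zero_of_mul this
  rw [map_intCast, ← Int.cast_natCast, ← Int.cast_mul, stdAddChar_coe, stdAddChar_coe, ← hk]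
  congr 1
  push_cast
  field_simp

theorem sum_ite_dvd_val {d s : ℕ} [NeZero d] [NeZero s] (f : ℕ → R) :
    ∑ y : ZMod (d * s), (if d ∣ y.val then f y.val else 0) = ∑ w : ZMod s, f (d * w.val) := by
  rw [sum_val_eq_sum_sum_add_mul rfl (fun n => if d ∣ n then f n else 0), Fintype.sum_eq_single 0]
  · simp
  · intro t ht
    refine sum_eq_zero fun w _ => if_neg ?_
    rw [Nat.dvd_add_left (dvd_mul_right d w.val), ← natCast_eq_zero_iff, natCast_zmod_val]
    exact ht

end ZMod

open ZMod (stdAddChar)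

noncomputable def quadGaussSum (N : ℕ) [NeZero N] (a : ZMod N) : ℂ :=
  ∑ x : ZMod N, stdAddChar (a * x ^ 2)

theorem quadGaussSum_mul_of_coprime {p r : ℕ} [NeZero p] [NeZero r] (h : p.Coprime r) (a : ℤ) :
    quadGaussSum (p * r) a = quadGaussSum p (a * r) * quadGaussSum r (a * p) := by
  rw [quadGaussSum, ZMod.sum_eq_sum_sum_of_coprime h, quadGaussSum, quadGaussSum, sum_mul_sum]
  refine sum_congr rfl fun u _ => sum_congr rfl fun v _ => ?_
  have hexp : (a : ZMod (p * r)) * (r * u.val + p * v.val) ^ 2 =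
      r * (a * r * u.val ^ 2) + p * (a * p * v.val ^ 2) +
        ((p * r : ℕ) : ZMod (p * r)) * (2 * a * u.val * v.val) := by
    push_cast; ring
  rw [hexp, ZMod.natCast_self, zero_mul, add_zero, AddChar.map_add_eq_mul,
    ZMod.stdAddChar_natCast_mul r rfl, ZMod.stdAddChar_natCast_mul p (mul_comm r p)]
  simp only [map_mul, map_pow, map_intCast, map_natCast, ZMod.natCast_zmod_val]

theorem sum_stdAddChar_mul_add_mul_sq {d s : ℕ} [NeZero d] [NeZero s] {a : ℤ}
    (ha : IsCoprime (d : ℤ) (2 * a)) (y : ℕ) :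
    ∑ z : ZMod d, stdAddChar ((a : ZMod (d ^ 2 * s)) * ((y : ZMod (d ^ 2 * s)) +
      ((d * s : ℕ) : ZMod (d ^ 2 * s)) * (z.val : ZMod (d ^ 2 * s))) ^ 2) =
        if d ∣ y then d * stdAddChar ((a : ZMod (d ^ 2 * s)) * (y : ZMod (d ^ 2 * s)) ^ 2)
        else 0 := by
  have hexp (z : ℕ) : (a : ZMod (d ^ 2 * s)) * (y + (d * s : ℕ) * z) ^ 2 =
      a * y ^ 2 + (d * s : ℕ) * (2 * a * y * z) + (d ^ 2 * s : ℕ) * (a * s * z ^ 2) := by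
    push_cast; ring
  have hy : 2 * (a : ZMod d) * y = 0 ↔ d ∣ y := by
    have h2a : IsUnit ((2 * a : ℤ) : ZMod d) := (ZMod.coe_int_isUnit_iff_isCoprime _ _).mpr ha
    push_cast at h2a
    rw [h2a.mul_right_eq_zero, ZMod.natCast_eq_zero_iff]
  simp_rw [hexp, ZMod.natCast_self, zero_mul, add_zero, AddChar.map_add_eq_mul,
    ZMod.stdAddChar_natCast_mul (N := d) (M := d ^ 2 * s) (d * s) (by ring), ← mul_sum]
  simp only [map_mul, map_intCast, map_natCast, map_ofNat, ZMod.natCast_zmod_val,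
    mul_comm (2 * (a : ZMod d) * y), AddChar.sum_mulShift _ (ZMod.isPrimitive_stdAddChar d),
    ZMod.card, hy]
  split_ifs <;> simp [mul_comm]

-- Stated for any `N = d² s`, so that it applies to `ZMod (p ^ (k + 2))` without a cast of types.
theorem quadGaussSum_sq_mul {d s N : ℕ} [NeZero d] [NeZero s] [NeZero N] (hN : d ^ 2 * s = N)
    {a : ℤ} (ha : IsCoprime (d : ℤ) (2 * a)) :
    quadGaussSum N a = d * quadGaussSum s a := by
  subst hN
  have hsq (w : ZMod s) :
      stdAddChar ((a : ZMod (d ^ 2 * s)) * ((d * w.val : ℕ) : ZMod (d ^ 2 * s)) ^ 2) =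
        stdAddChar ((a : ZMod s) * w ^ 2) := by
    rw [show (a : ZMod (d ^ 2 * s)) * ((d * w.val : ℕ) : ZMod (d ^ 2 * s)) ^ 2 =
      ((d ^ 2 : ℕ) : ZMod (d ^ 2 * s)) * (a * (w.val : ZMod (d ^ 2 * s)) ^ 2) by push_cast; ring,
      ZMod.stdAddChar_natCast_mul (N := s) (d ^ 2) (by ring)]
    simp only [map_mul, map_pow, map_intCast, map_natCast, ZMod.natCast_zmod_val]
  have hsplit := ZMod.sum_val_eq_sum_sum_add_mul (M := d * s) (d := d) (N := d ^ 2 * s) (by ring)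
    (fun n => stdAddChar ((a : ZMod (d ^ 2 * s)) * (n : ZMod (d ^ 2 * s)) ^ 2))
  simp only [ZMod.natCast_zmod_val, Nat.cast_add, Nat.cast_mul] at hsplit
  calc quadGaussSum (d ^ 2 * s) a
      = ∑ y : ZMod (d * s), ∑ z : ZMod d, stdAddChar ((a : ZMod (d ^ 2 * s)) *
          ((y.val : ZMod (d ^ 2 * s)) + ((d * s : ℕ) : ZMod (d ^ 2 * s)) *
            (z.val : ZMod (d ^ 2 * s))) ^ 2) := by
        rw [quadGaussSum, hsplit]
        push_cast
        rfl
    _ = d * ∑ y : ZMod (d * s),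
          if d ∣ y.val then stdAddChar ((a : ZMod (d ^ 2 * s)) * (y.val : ZMod (d ^ 2 * s)) ^ 2)
          else 0 := by
        simp_rw [sum_stdAddChar_mul_add_mul_sq ha, mul_sum, mul_ite, mul_zero]
    _ = d * quadGaussSum s a := by
        rw [ZMod.sum_ite_dvd_val
          (fun n => stdAddChar ((a : ZMod (d ^ 2 * s)) * (n : ZMod (d ^ 2 * s)) ^ 2)), quadGaussSum]
        simp_rw [hsq]

theorem quadGaussSum_prime {p : ℕ} [Fact p.Prime] (hp : p ≠ 2) {a : ℤ}
    (ha : IsCoprime (p : ℤ) a) :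
    quadGaussSum p a = jacobiSym a p * quadGaussSum p 1 := by
  have ha0 : (a : ZMod p) ≠ 0 := ((ZMod.coe_int_isUnit_iff_isCoprime a p).mpr ha).ne_zero
  rw [quadGaussSum, sum_addChar_mul_sq (by rwa [ZMod.ringChar_zmod_n])
    (ZMod.isPrimitive_stdAddChar p) ha0, ← jacobiSym.legendreSym.to_jacobiSym, quadGaussSum]
  simp [legendreSym]

theorem quadGaussSum_of_eq_one {N : ℕ} [NeZero N] (hN : N = 1) (a : ℤ) :
    quadGaussSum N a = jacobiSym a N * quadGaussSum N 1 := by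
  subst hN
  rw [jacobiSym.one_right, Int.cast_one, one_mul, Subsingleton.elim (a : ZMod 1) 1]

theorem quadGaussSum_prime_pow {p : ℕ} [Fact p.Prime] (hp : p ≠ 2) {a : ℤ}
    (ha : IsCoprime (p : ℤ) a) (k : ℕ) :
    quadGaussSum (p ^ k) a = jacobiSym a (p ^ k) * quadGaussSum (p ^ k) 1 := by
  have h2 : IsCoprime (p : ℤ) 2 := Nat.isCoprime_iff_coprime.mpr
    (Nat.coprime_two_right.mpr (Nat.Prime.odd_of_ne_two Fact.out hp))
  induction k using Nat.twoStepInduction with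
  | zero => exact quadGaussSum_of_eq_one (pow_zero p) a
  | one =>
    have : Fact (p ^ 1).Prime := ⟨by simpa using Fact.out⟩
    exact quadGaussSum_prime (by simpa) (by simpa)
  | more k ih _ =>
    have hN : p ^ 2 * p ^ k = p ^ (k + 2) := by ring
    rw [quadGaussSum_sq_mul hN (h2.mul_right ha), ← Int.cast_one,
      quadGaussSum_sq_mul hN (by simpa using h2), Int.cast_one, ih, ← hN,
      jacobiSym.mul_right, jacobiSym.pow_right a p 2,
      jacobiSym.sq_one (Int.isCoprime_iff_gcd_eq_one.mp ha.symm)]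
    push_cast
    ring

theorem quadGaussSum_eq_jacobiSym_mul (q : ℕ) [NeZero q] (hq : Odd q) {a : ℤ}
    (ha : IsCoprime (q : ℤ) a) :
    quadGaussSum q a = jacobiSym a q * quadGaussSum q 1 := by
  revert ‹NeZero q› a
  induction q using Nat.recOnPosPrimePosCoprime with
  | zero => exact absurd hq Nat.not_odd_zero
  | one =>
    intro _ a _
    exact quadGaussSum_of_eq_one rfl a
  | prime_pow p k hp hk =>
    intro _ a ha
    have : Fact p.Prime := ⟨hp⟩
    have hp2 : p ≠ 2 := by
      rintro rfl
      exact Nat.not_even_iff_odd.mpr hq ((Nat.even_pow' hk.ne').mpr even_two)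
    push_cast at ha
    exact quadGaussSum_prime_pow hp2 ((IsCoprime.pow_left_iff hk).mp ha) k
  | coprime p r hp hr hpr ihp ihr =>
    intro _ a ha
    have : NeZero p := ⟨by omega⟩
    have : NeZero r := ⟨by omega⟩
    obtain ⟨hpo, hro⟩ := Nat.odd_mul.mp hq
    have hpr' : IsCoprime (p : ℤ) r := Nat.isCoprime_iff_coprime.mpr hpr
    push_cast at ha
    have hpa := ihp hpo (a := a * r) (ha.of_mul_left_left.mul_right hpr')
    have hra := ihr hro (a := a * p) (ha.of_mul_left_right.mul_right hpr'.symm)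
    have hp1 := ihp hpo (a := r) hpr'
    have hr1 := ihr hro (a := p) hpr'.symm
    push_cast at hpa hra hp1 hr1
    rw [quadGaussSum_mul_of_coprime hpr, ← Int.cast_one, quadGaussSum_mul_of_coprime hpr]
    simp only [Int.cast_one, one_mul]
    rw [hpa, hra, hp1, hr1, jacobiSym.mul_left, jacobiSym.mul_left, jacobiSym.mul_right]
    push_cast
    ring

theorem e_intCast_div (q : ℕ) [NeZero q] (k : ℤ) : e (k / q) = stdAddChar (k : ZMod q) := by
  rw [e, ZMod.stdAddChar_coe]
  congr 1
  push_cast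
  ring

theorem G_eq_sum_stdAddChar (q : ℕ) [NeZero q] (m n : ℤ) :
    G q m n = ∑ x : ZMod q, stdAddChar ((m : ZMod q) * x ^ 2 + (n : ZMod q) * x) := by
  rw [G, ← ZMod.sum_Icc_one_natCast]
  refine sum_congr rfl fun x _ => ?_
  rw [e_intCast_div]
  push_cast
  rfl

theorem gauss_sum_twist (q : ℕ) (hq : 0 < q) (m n : ℤ)
    (hco : Int.gcd (q : ℤ) (2 * m) = 1)
    (b : ℤ) (hb : (4 * m * b) % (q : ℤ) = 1 % (q : ℤ)) :
    G q m n = e ((-(b * n ^ 2) : ℤ) / (q : ℝ)) * (jacobiSym m q : ℂ) * G q 1 0 := by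
  have : NeZero q := ⟨hq.ne'⟩
  have h2m : IsCoprime (q : ℤ) (2 * m) := Int.isCoprime_iff_gcd_eq_one.mpr hco
  have hodd : Odd q := Nat.coprime_two_right.mp
    (Nat.isCoprime_iff_coprime.mp (by exact_mod_cast h2m.of_mul_right_left))
  have hmb : 4 * (m : ZMod q) * b = 1 := by
    exact_mod_cast (ZMod.intCast_eq_intCast_iff' _ _ _).mpr hb
  have hG1 : G q 1 0 = quadGaussSum q 1 := by simp [G_eq_sum_stdAddChar, quadGaussSum]
  rw [G_eq_sum_stdAddChar, AddChar.sum_quadratic_complete_sq _ hmb, hG1, e_intCast_div,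
    ← quadGaussSum, quadGaussSum_eq_jacobiSym_mul q hodd h2m.of_mul_right_right]
  push_cast
  ring
end

section
/- For every ε > 0 there is a constant C such that for all coprime positive integers q1, q2 with 8 ∤ q1 and 8 ∤ q2, the count λ(q1, q2) of pairs (x,y) with 1 ≤ x, y ≤ q1 q2, x^2 + y^2 + 1 ≡ 0 (mod q1) and x^2 + y^2 + 2 ≡ 0 (mod q2) satisfies λ(q1, q2) ≤ C (q1 q2)^{1+ε}. -/
open Finset Real

def lamCount (q1 q2 : ℕ) : ℕ :=
  (((Finset.Icc 1 (q1 * q2)) ×ˢ (Finset.Icc 1 (q1 * q2))).filter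
      (fun p => (q1 : ℤ) ∣ ((p.1 : ℤ) ^ 2 + (p.2 : ℤ) ^ 2 + 1) ∧
                (q2 : ℤ) ∣ ((p.1 : ℤ) ^ 2 + (p.2 : ℤ) ^ 2 + 2))).card

/-!
By the Chinese remainder theorem the two congruences together say `x² + y² ≡ a (mod q)` for a
single residue `a`, where `q = q1 q2`; so `λ(q1, q2)` is at most the number of solutions of
`x² + y² = a` in `ZMod q`. Cauchy–Schwarz applied to `r(u) = #{x | x² = u}` bounds this by the
number of solutions of `x² = y²`, and `(x, y) ↦ (x - y, x + y)` maps those at most two-to-one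
into the solutions of `u v = 0`. For fixed `u` there are at most `gcd(u, q)` choices of `v`, and
`∑ᵤ gcd(u, q) ≤ q τ(q)`. Finally `τ(q) ≪_ε q^ε`.
-/

lemma exists_add_one_le_mul_pow {c : ℝ} (hc : 1 < c) :
    ∃ K : ℝ, 1 ≤ K ∧ ∀ a : ℕ, (a + 1 : ℝ) ≤ K * c ^ a := by
  have hc' : 0 < c - 1 := sub_pos.mpr hc
  refine ⟨c / (c - 1), (one_le_div hc').mpr (by linarith), fun a => ?_⟩
  have bernoulli : 1 + a * (c - 1) ≤ c ^ a := by
    simpa using one_add_mul_le_pow (by linarith : -2 ≤ c - 1) a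
  have hexpand : c / (c - 1) * (1 + a * (c - 1)) = c / (c - 1) + a * c := by field_simp
  calc (a + 1 : ℝ) ≤ c / (c - 1) * (1 + a * (c - 1)) := by
        rw [hexpand]
        nlinarith [(one_le_div hc').mpr (by linarith : c - 1 ≤ c), (a.cast_nonneg : (0 : ℝ) ≤ a)]
    _ ≤ c / (c - 1) * c ^ a := by gcongr

lemma add_one_le_ite_mul_pow {c K y : ℝ} (hc : 0 ≤ c) (hcy : c ≤ y) (hK0 : 0 ≤ K)
    (hK : ∀ a : ℕ, (a + 1 : ℝ) ≤ K * c ^ a) (a : ℕ) :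
    (a + 1 : ℝ) ≤ (if y < 2 then K else 1) * y ^ a := by
  split_ifs with hy
  · calc (a + 1 : ℝ) ≤ K * c ^ a := hK a
      _ ≤ K * y ^ a := by gcongr
  · rw [one_mul]
    calc (a + 1 : ℝ) ≤ 2 ^ a := by exact_mod_cast Nat.lt_two_pow_self
      _ ≤ y ^ a := by gcongr; linarith

/-- Only the primes `p < 2 ^ (1 / ε)` contribute a factor larger than `1` to `τ(n) / n ^ ε`. -/
theorem Nat.card_divisors_le_mul_rpow {ε : ℝ} (hε : 0 < ε) :
    ∃ C : ℝ, ∀ n : ℕ, n ≠ 0 → (#n.divisors : ℝ) ≤ C * (n : ℝ) ^ ε := by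
  obtain ⟨K, hK1, hK⟩ :=
    exists_add_one_le_mul_pow (Real.one_lt_rpow (by norm_num : (1 : ℝ) < 2) hε)
  refine ⟨K ^ ⌈(2 : ℝ) ^ ε⁻¹⌉₊, fun n hn => ?_⟩
  have hsmall : #{p ∈ n.primeFactors | ((p : ℕ) : ℝ) ^ ε < 2} ≤ ⌈(2 : ℝ) ^ ε⁻¹⌉₊ := by
    refine (card_le_card fun p hp => ?_).trans (card_range _).le
    rw [mem_filter] at hp
    rw [mem_range, Nat.lt_ceil, lt_rpow_inv_iff_of_pos (Nat.cast_nonneg _) zero_le_two hε]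
    exact hp.2
  have hrpow : (n : ℝ) ^ ε = ∏ p ∈ n.primeFactors, ((p : ℝ) ^ ε) ^ n.factorization p := by
    conv_lhs => rw [Nat.prod_primeFactors_pow_factorization hn]
    push_cast
    rw [← finsetProd_rpow _ _ fun p _ => by positivity]
    exact prod_congr rfl fun p _ => (rpow_pow_comm (Nat.cast_nonneg p) ε _).symm
  have hlocal : ∀ p ∈ n.primeFactors, ((n.factorization p + 1 : ℕ) : ℝ) ≤
      (if (p : ℝ) ^ ε < 2 then K else 1) * ((p : ℝ) ^ ε) ^ n.factorization p := fun p hp => by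
    push_cast
    refine add_one_le_ite_mul_pow (by positivity) ?_ (by linarith) hK _
    exact rpow_le_rpow zero_le_two
      (by exact_mod_cast (Nat.prime_of_mem_primeFactors hp).two_le) hε.le
  calc (#n.divisors : ℝ) = ∏ p ∈ n.primeFactors, ((n.factorization p + 1 : ℕ) : ℝ) := by
        rw [Nat.card_divisors hn, Nat.cast_prod]
    _ ≤ ∏ p ∈ n.primeFactors,
          (if (p : ℝ) ^ ε < 2 then K else 1) * ((p : ℝ) ^ ε) ^ n.factorization p :=
        prod_le_prod (fun _ _ => by positivity) hlocal
    _ = K ^ #{p ∈ n.primeFactors | ((p : ℕ) : ℝ) ^ ε < 2} * (n : ℝ) ^ ε := by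
        rw [prod_mul_distrib, prod_ite, prod_const, prod_const_one, mul_one, hrpow]
    _ ≤ K ^ ⌈(2 : ℝ) ^ ε⁻¹⌉₊ * (n : ℝ) ^ ε := by gcongr

lemma card_filter_prod_eq_sum {α β : Type*} [Fintype α] [Fintype β] (P : α → β → Prop)
    [∀ a b, Decidable (P a b)] : #{p : α × β | P p.1 p.2} = ∑ a, #{b | P a b} := by
  simp only [card_filter, Fintype.sum_prod_type]

lemma sum_comp_eq_sum_card_fiber_mul {α β : Type*} [Fintype α] [Fintype β] [DecidableEq β]
    (f : α → β) (g : β → ℕ) : ∑ x, g (f x) = ∑ u, #{x | f x = u} * g u := by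
  rw [← sum_fiberwise univ f]
  refine sum_congr rfl fun u _ => ?_
  rw [sum_congr rfl fun x hx => congrArg g (mem_filter.mp hx).2, sum_const, smul_eq_mul]

lemma card_add_eq_le_card_eq {α G : Type*} [Fintype α] [AddCommGroup G] [Fintype G]
    [DecidableEq G] (f : α → G) (a : G) :
    #{p : α × α | f p.1 + f p.2 = a} ≤ #{p : α × α | f p.1 = f p.2} := by
  set r : G → ℕ := fun u => #{x | f x = u}
  have hsum : #{p : α × α | f p.1 + f p.2 = a} = ∑ u, r u * r (a - u) := by
    rw [card_filter_prod_eq_sum (fun x y => f x + f y = a)]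
    simp_rw [← eq_sub_iff_add_eq']
    exact sum_comp_eq_sum_card_fiber_mul f (fun u => r (a - u))
  have hsq : #{p : α × α | f p.1 = f p.2} = ∑ u, r u ^ 2 := by
    calc #{p : α × α | f p.1 = f p.2} = ∑ x, r (f x) := by
          rw [card_filter_prod_eq_sum (fun x y => f x = f y)]
          exact sum_congr rfl fun x _ => congrArg card (filter_congr fun _ _ => eq_comm)
      _ = ∑ u, r u ^ 2 :=
          (sum_comp_eq_sum_card_fiber_mul f r).trans (sum_congr rfl fun u _ => (sq (r u)).symm)
  have hreflect : ∑ u, r (a - u) ^ 2 = ∑ u, r u ^ 2 :=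
    Fintype.sum_equiv (Equiv.subLeft a) _ _ fun _ => rfl
  rw [hsum, hsq, ← pow_le_pow_iff_left₀ (Nat.zero_le _) (Nat.zero_le _) two_ne_zero]
  calc (∑ u, r u * r (a - u)) ^ 2 ≤ (∑ u, r u ^ 2) * ∑ u, r (a - u) ^ 2 :=
        sum_mul_sq_le_sq_mul_sq _ _ _
    _ = (∑ u, r u ^ 2) ^ 2 := by rw [hreflect, sq]

lemma card_mul_eq_le_card_mul_eq_zero {R : Type*} [Ring R] [Fintype R] [DecidableEq R]
    (c b : R) : #{x : R | c * x = b} ≤ #{x : R | c * x = 0} := by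
  by_cases hb : ∃ x, c * x = b
  · exact (AddMonoidHom.card_fiber_eq_of_mem_range (AddMonoidHom.mulLeft c) hb
      ⟨0, mul_zero c⟩).le
  · rw [filter_false_of_mem fun x _ hx => hb ⟨x, hx⟩, card_empty]
    exact Nat.zero_le _

lemma card_sq_eq_sq_le {R : Type*} [CommRing R] [Fintype R] [DecidableEq R] :
    #{p : R × R | p.1 ^ 2 = p.2 ^ 2} ≤
      #{x : R | 2 * x = 0} * #{p : R × R | p.1 * p.2 = 0} := by
  refine card_le_mul_card_image_of_maps_to (f := fun p : R × R => (p.1 - p.2, p.1 + p.2))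
    (fun p hp => ?_) _ fun b _ => ?_
  · simp only [mem_filter, mem_univ, true_and] at hp ⊢
    linear_combination hp
  · refine le_trans (card_le_card_of_injOn Prod.fst (t := {x : R | 2 * x = b.1 + b.2})
      (fun p hp => ?_) fun p hp p' hp' h => ?_) (card_mul_eq_le_card_mul_eq_zero 2 _)
    · simp only [coe_filter, mem_filter, mem_univ, true_and, Set.mem_ofPred_eq] at hp ⊢
      rw [← hp.2]
      ring
    · simp only [coe_filter, mem_filter, mem_univ, true_and, Set.mem_ofPred_eq] at hp hp'
      have hsum := congrArg Prod.fst (hp.2.trans hp'.2.symm)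
      simp only at hsum
      exact Prod.ext h (by linear_combination h - hsum)

namespace ZMod

variable {q : ℕ} [NeZero q]

lemma card_two_mul_eq_zero_le : #{x : ZMod q | 2 * x = 0} ≤ 2 := by
  simp_rw [two_mul, ← two_nsmul]
  exact IsAddCyclic.card_nsmul_eq_zero_le two_pos

lemma card_mul_eq_zero_le_gcd (c : ZMod q) : #{x : ZMod q | c * x = 0} ≤ c.val.gcd q := by
  have hbezout : ((c.val.gcd q : ℕ) : ZMod q) = c * (c.val.gcdA q : ZMod q) := by
    have := congrArg (Int.cast : ℤ → ZMod q) (Nat.gcd_eq_gcd_ab c.val q)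
    push_cast at this
    simpa [ZMod.natCast_val, ZMod.cast_id] using this
  calc #{x : ZMod q | c * x = 0} ≤ #{x : ZMod q | c.val.gcd q • x = 0} := by
        refine card_le_card fun x hx => ?_
        simp only [mem_filter, mem_univ, true_and] at hx ⊢
        rw [nsmul_eq_mul, hbezout, mul_right_comm, hx, zero_mul]
    _ ≤ c.val.gcd q :=
        IsAddCyclic.card_nsmul_eq_zero_le (Nat.gcd_pos_of_pos_right _ (NeZero.pos q))

lemma card_dvd_val_le {d : ℕ} (hd : d ∣ q) : #{u : ZMod q | d ∣ u.val} ≤ q / d := by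
  have hqd : 0 < q / d :=
    Nat.div_pos (Nat.le_of_dvd (NeZero.pos q) hd) (Nat.pos_of_dvd_of_pos hd (NeZero.pos q))
  calc #{u : ZMod q | d ∣ u.val} ≤ #{u : ZMod q | (q / d) • u = 0} := by
        refine card_le_card fun u hu => ?_
        simp only [mem_filter, mem_univ, true_and] at hu ⊢
        obtain ⟨k, hk⟩ := hu
        rw [nsmul_eq_mul, ← ZMod.natCast_zmod_val u, hk, ← Nat.cast_mul, ← mul_assoc,
          Nat.div_mul_cancel hd]
        simp
    _ ≤ q / d := IsAddCyclic.card_nsmul_eq_zero_le hqd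

lemma sum_gcd_val_le : ∑ u : ZMod q, u.val.gcd q ≤ q * #q.divisors := by
  have hmaps : ∀ u ∈ (univ : Finset (ZMod q)), u.val.gcd q ∈ q.divisors := fun u _ =>
    Nat.mem_divisors.mpr ⟨Nat.gcd_dvd_right _ _, NeZero.ne q⟩
  rw [← sum_fiberwise_of_maps_to hmaps, mul_comm, ← smul_eq_mul, ← sum_const]
  refine sum_le_sum fun d hd => ?_
  have hdq : d ∣ q := Nat.dvd_of_mem_divisors hd
  calc ∑ u ∈ {u : ZMod q | u.val.gcd q = d}, u.val.gcd q
        = #{u : ZMod q | u.val.gcd q = d} * d := by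
        rw [sum_congr rfl fun u hu => (mem_filter.mp hu).2, sum_const, smul_eq_mul]
    _ ≤ (q / d) * d := by
        gcongr
        refine (card_le_card fun u hu => ?_).trans (card_dvd_val_le hdq)
        simp only [mem_filter, mem_univ, true_and] at hu ⊢
        exact hu ▸ Nat.gcd_dvd_left _ _
    _ = q := Nat.div_mul_cancel hdq

lemma card_mul_eq_zero_le : #{p : ZMod q × ZMod q | p.1 * p.2 = 0} ≤ q * #q.divisors := by
  rw [card_filter_prod_eq_sum (fun x y : ZMod q => x * y = 0)]
  exact (sum_le_sum fun c _ => card_mul_eq_zero_le_gcd c).trans sum_gcd_val_le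

lemma card_sq_add_sq_eq_le (a : ZMod q) :
    #{p : ZMod q × ZMod q | p.1 ^ 2 + p.2 ^ 2 = a} ≤ 2 * (q * #q.divisors) :=
  calc #{p : ZMod q × ZMod q | p.1 ^ 2 + p.2 ^ 2 = a}
      ≤ #{p : ZMod q × ZMod q | p.1 ^ 2 = p.2 ^ 2} := card_add_eq_le_card_eq (· ^ 2) a
    _ ≤ #{x : ZMod q | 2 * x = 0} * #{p : ZMod q × ZMod q | p.1 * p.2 = 0} := card_sq_eq_sq_le
    _ ≤ 2 * (q * #q.divisors) := Nat.mul_le_mul card_two_mul_eq_zero_le card_mul_eq_zero_le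

end ZMod

lemma ZMod.natCast_injOn_Icc (q : ℕ) : Set.InjOn (Nat.cast : ℕ → ZMod q) (Set.Icc 1 q) := by
  intro a ha b hb hab
  refine ((ZMod.natCast_eq_natCast_iff a b q).mp hab).eq_of_abs_lt ?_
  rw [abs_sub_lt_iff]
  obtain ⟨ha1, ha2⟩ := ha
  obtain ⟨hb1, hb2⟩ := hb
  omega

lemma ZMod.intCast_eq_neg_iff_dvd (q : ℕ) (z c : ℤ) :
    (z : ZMod q) = -c ↔ (q : ℤ) ∣ z + c := by
  rw [eq_neg_iff_add_eq_zero, ← ZMod.intCast_zmod_eq_zero_iff_dvd, Int.cast_add]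

lemma ZMod.intCast_eq_chineseRemainder_symm_iff {m n : ℕ} (h : m.Coprime n) (z : ℤ)
    (a : ZMod m) (b : ZMod n) :
    (z : ZMod (m * n)) = (ZMod.chineseRemainder h).symm (a, b) ↔
      (z : ZMod m) = a ∧ (z : ZMod n) = b := by
  rw [RingEquiv.eq_symm_apply, map_intCast, Prod.ext_iff, Prod.fst_intCast, Prod.snd_intCast]

lemma lamCount_le_card_sq_add_sq_eq {q1 q2 : ℕ} [NeZero (q1 * q2)] (hco : q1.Coprime q2) :
    ∃ a : ZMod (q1 * q2),
      lamCount q1 q2 ≤ #{p : ZMod (q1 * q2) × ZMod (q1 * q2) | p.1 ^ 2 + p.2 ^ 2 = a} := by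
  refine ⟨(ZMod.chineseRemainder hco).symm (-1, -2), card_le_card_of_injOn
    (fun p => ((p.1 : ZMod (q1 * q2)), (p.2 : ZMod (q1 * q2)))) (fun p hp => ?_) ?_⟩
  · simp only [coe_filter, mem_univ, true_and, Set.mem_ofPred_eq] at hp ⊢
    have hcrt := (ZMod.intCast_eq_chineseRemainder_symm_iff hco
      ((p.1 : ℤ) ^ 2 + (p.2 : ℤ) ^ 2) (-1) (-2)).mpr
    push_cast at hcrt
    refine hcrt ⟨?_, ?_⟩
    · exact_mod_cast (ZMod.intCast_eq_neg_iff_dvd q1 _ 1).mpr hp.2.1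
    · exact_mod_cast (ZMod.intCast_eq_neg_iff_dvd q2 _ 2).mpr hp.2.2
  · intro p hp p' hp' h
    simp only [coe_filter, mem_product, mem_Icc, Set.mem_ofPred_eq, Prod.mk.injEq] at hp hp' h
    exact Prod.ext (ZMod.natCast_injOn_Icc _ ⟨hp.1.1.1, hp.1.1.2⟩ ⟨hp'.1.1.1, hp'.1.1.2⟩ h.1)
      (ZMod.natCast_injOn_Icc _ ⟨hp.1.2.1, hp.1.2.2⟩ ⟨hp'.1.2.1, hp'.1.2.2⟩ h.2)

theorem lamCount_bound : ∀ ε : ℝ, 0 < ε → ∃ C : ℝ,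
    ∀ q1 q2 : ℕ, 0 < q1 → 0 < q2 → ¬ (8 ∣ q1) → ¬ (8 ∣ q2) → Nat.Coprime q1 q2 →
      (lamCount q1 q2 : ℝ) ≤ C * ((q1 * q2 : ℕ) : ℝ) ^ (1 + ε) := by
  intro ε hε
  obtain ⟨C, hC⟩ := Nat.card_divisors_le_mul_rpow hε
  refine ⟨2 * C, fun q1 q2 hq1 hq2 _ _ hco => ?_⟩
  have : NeZero (q1 * q2) := ⟨(Nat.mul_pos hq1 hq2).ne'⟩
  obtain ⟨a, ha⟩ := lamCount_le_card_sq_add_sq_eq hco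
  have hcount : (lamCount q1 q2 : ℝ) ≤ 2 * ((q1 * q2 : ℕ) * #(q1 * q2).divisors) := by
    exact_mod_cast ha.trans (ZMod.card_sq_add_sq_eq_le a)
  calc (lamCount q1 q2 : ℝ) ≤ 2 * ((q1 * q2 : ℕ) * #(q1 * q2).divisors) := hcount
    _ ≤ 2 * ((q1 * q2 : ℕ) * (C * ((q1 * q2 : ℕ) : ℝ) ^ ε)) := by
        gcongr
        exact hC _ (NeZero.ne _)
    _ = 2 * C * ((q1 * q2 : ℕ) : ℝ) ^ (1 + ε) := by
        rw [rpow_one_add' (Nat.cast_nonneg _) (by linarith)]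
        ring
end

section
/- If q1', q1'', q2', q2'' are positive integers with q1' q1'' coprime to q2' q2'', q1' coprime to q1'', and q2' coprime to q2'', then λ(q1' q1'', q2' q2'', m, n) = λ(q1', q2', m ū, n ū) * λ(q1'', q2'', m v̄, n v̄), where ū is the inverse of q1'' q2'' modulo q1' q2' and v̄ is the inverse of q1' q2' modulo q1'' q2''. -/
open Complex Finset

noncomputable def lam (q1 q2 : ℕ) (m n : ℤ) : ℂ :=
  ∑ p ∈ ((Finset.Icc 1 (q1 * q2)) ×ˢ (Finset.Icc 1 (q1 * q2))).filter
      (fun p => (q1 : ℤ) ∣ ((p.1 : ℤ) ^ 2 + (p.2 : ℤ) ^ 2 + 1) ∧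
                (q2 : ℤ) ∣ ((p.1 : ℤ) ^ 2 + (p.2 : ℤ) ^ 2 + 2)),
    e ((m * (p.1 : ℤ) + n * (p.2 : ℤ)) / ((q1 * q2 : ℕ) : ℝ))

/-!
Write `A = q1' q2'` and `B = q1'' q2''`. By the Chinese remainder theorem, `(a, c) ↦ B ū a + A v̄ c`
is a bijection from residues mod `A` times residues mod `B` onto residues mod `AB`, and the
summand of `λ` is `AB`-periodic in each variable, so the sum may be taken over these points.
At `x = B ū a + A v̄ c`, `y = B ū b + A v̄ d` one has `x ≡ a, y ≡ b (mod A)` and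
`x ≡ c, y ≡ d (mod B)`, so the congruence conditions split between `(a, b)` and `(c, d)`, while
the phase `(m x + n y) / (AB)` is exactly `(m ū a + n ū b) / A + (m v̄ c + n v̄ d) / B`.
Hence the summand factors, and so does the sum.
-/

lemma e_add (s t : ℝ) : e (s + t) = e s * e t := by
  simp only [e, ← Complex.exp_add]
  push_cast
  ring_nf

lemma e_intCast (k : ℤ) : e k = 1 := by
  rw [e, ← Complex.exp_int_mul_two_pi_mul_I k]
  push_cast
  ring_nf

lemma e_intCast_div_congr {N : ℕ} {k k' : ℤ} (h : k ≡ k' [ZMOD N]) :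
    e (k / N) = e (k' / N) := by
  obtain rfl | hN := eq_or_ne N 0
  · rw [Nat.cast_zero, Int.modEq_zero_iff] at h
    rw [h]
  obtain ⟨t, ht⟩ := h.dvd
  have : (k' : ℝ) / N = k / N + t := by
    rw [show k' = k + N * t by linarith]
    push_cast
    field_simp
  rw [this, e_add, e_intCast, mul_one]

noncomputable def lamTerm (q1 q2 : ℕ) (m n x y : ℤ) : ℂ :=
  if (q1 : ℤ) ∣ x ^ 2 + y ^ 2 + 1 ∧ (q2 : ℤ) ∣ x ^ 2 + y ^ 2 + 2 then
    e ((m * x + n * y) / ((q1 * q2 : ℕ) : ℝ))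
  else 0

lemma lam_eq_sum_Icc (q1 q2 : ℕ) (m n : ℤ) :
    lam q1 q2 m n = ∑ x ∈ Icc 1 (q1 * q2), ∑ y ∈ Icc 1 (q1 * q2), lamTerm q1 q2 m n x y := by
  rw [lam, sum_filter, sum_product]
  rfl

lemma lamTerm_congr {q1 q2 : ℕ} (m n : ℤ) {x x' y y' : ℤ}
    (hx : x ≡ x' [ZMOD (q1 * q2 : ℕ)]) (hy : y ≡ y' [ZMOD (q1 * q2 : ℕ)]) :
    lamTerm q1 q2 m n x y = lamTerm q1 q2 m n x' y' := by
  have hsq (k : ℤ) := ((hx.pow 2).add (hy.pow 2)).add_right k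
  have hq1 : (q1 : ℤ) ∣ (q1 * q2 : ℕ) := by exact_mod_cast dvd_mul_right q1 q2
  have hq2 : (q2 : ℤ) ∣ (q1 * q2 : ℕ) := by exact_mod_cast dvd_mul_left q2 q1
  have he : e ((m * x + n * y) / ((q1 * q2 : ℕ) : ℝ)) =
      e ((m * x' + n * y') / ((q1 * q2 : ℕ) : ℝ)) := by
    exact_mod_cast e_intCast_div_congr ((hx.mul_left m).add (hy.mul_left n))
  simp only [lamTerm, ((hsq 1).of_dvd hq1).dvd_iff, ((hsq 2).of_dvd hq2).dvd_iff, he]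

lemma sum_Icc_one_eq_sum_range {M : Type*} [AddCommMonoid M] (N : ℕ) (f : ℕ → M)
    (h : f N = f 0) : ∑ x ∈ Icc 1 N, f x = ∑ x ∈ range N, f x := by
  rcases N with _ | N
  · rfl
  have shift := sum_Ico_add' f 0 (N + 1) 1
  rw [zero_add, ← range_eq_Ico, Ico_add_one_right_eq_Icc] at shift
  rw [← shift, sum_range_succ (fun x => f (x + 1)), h, ← sum_range_succ']

lemma lam_eq_sum_range (q1 q2 : ℕ) (m n : ℤ) :
    lam q1 q2 m n = ∑ x ∈ range (q1 * q2), ∑ y ∈ range (q1 * q2), lamTerm q1 q2 m n x y := by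
  have hQ : ((q1 * q2 : ℕ) : ℤ) ≡ 0 [ZMOD (q1 * q2 : ℕ)] := Int.modEq_zero_iff_dvd.2 dvd_rfl
  rw [lam_eq_sum_Icc, sum_Icc_one_eq_sum_range]
  · exact sum_congr rfl fun x _ => sum_Icc_one_eq_sum_range _ _ (lamTerm_congr m n rfl hQ)
  · exact sum_congr rfl fun y _ => lamTerm_congr m n hQ rfl

lemma sum_range_eq_sum_zmod {M : Type*} [AddCommMonoid M] (N : ℕ) [NeZero N] (f : ℕ → M) :
    ∑ x ∈ range N, f x = ∑ x : ZMod N, f x.val := by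
  obtain ⟨N, rfl⟩ := Nat.exists_eq_succ_of_ne_zero (NeZero.ne N)
  exact (Fin.sum_univ_eq_sum_range f (N + 1)).symm

lemma Nat.Coprime.natCast_mul_dvd_iff {p q : ℕ} (h : p.Coprime q) {z : ℤ} :
    ((p * q : ℕ) : ℤ) ∣ z ↔ (p : ℤ) ∣ z ∧ (q : ℤ) ∣ z := by
  rw [Nat.cast_mul]
  exact ⟨fun hz => ⟨dvd_of_mul_right_dvd hz, dvd_of_mul_left_dvd hz⟩,
    fun hz => h.isCoprime.mul_dvd hz.1 hz.2⟩

section CRT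

variable {A B u v : ℤ}

lemma crt_modEq_left (hu : B * u ≡ 1 [ZMOD A]) (a c : ℤ) :
    B * u * a + A * v * c ≡ a [ZMOD A] := by
  calc B * u * a + A * v * c ≡ 1 * a + 0 [ZMOD A] :=
        (hu.mul_right a).add (Int.modEq_zero_iff_dvd.2 (Dvd.intro _ (mul_assoc A v c).symm))
    _ = a := by ring

lemma crt_modEq_right (hv : A * v ≡ 1 [ZMOD B]) (a c : ℤ) :
    B * u * a + A * v * c ≡ c [ZMOD B] := by
  calc B * u * a + A * v * c ≡ 0 + 1 * c [ZMOD B] :=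
        (Int.modEq_zero_iff_dvd.2 (Dvd.intro _ (mul_assoc B u a).symm)).add (hv.mul_right c)
    _ = c := by ring

end CRT

lemma ZMod.chineseRemainder_symm_apply {A B : ℕ} [NeZero A] [NeZero B] (h : A.Coprime B)
    {u v : ℤ} (hu : B * u ≡ 1 [ZMOD A]) (hv : A * v ≡ 1 [ZMOD B]) (a : ZMod A) (c : ZMod B) :
    (chineseRemainder h).symm (a, c) = ((B * u * a.val + A * v * c.val : ℤ) : ZMod (A * B)) := by
  rw [RingEquiv.symm_apply_eq, map_intCast]
  ext
  · rw [Prod.fst_intCast, (ZMod.intCast_eq_intCast_iff _ _ _).2 (crt_modEq_left hu _ _),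
      Int.cast_natCast, ZMod.natCast_zmod_val]
  · rw [Prod.snd_intCast, (ZMod.intCast_eq_intCast_iff _ _ _).2 (crt_modEq_right hv _ _),
      Int.cast_natCast, ZMod.natCast_zmod_val]

lemma sum_range_mul_eq_sum_crt {M : Type*} [AddCommMonoid M] {A B : ℕ} [NeZero A] [NeZero B]
    {u v : ℤ} (hu : B * u ≡ 1 [ZMOD A]) (hv : A * v ≡ 1 [ZMOD B]) (f : ℤ → M)
    (hf : ∀ x y, x ≡ y [ZMOD (A * B : ℕ)] → f x = f y) :
    ∑ x ∈ range (A * B), f x = ∑ a ∈ range A, ∑ c ∈ range B, f (B * u * a + A * v * c) := by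
  have hAB : A.Coprime B := by
    refine ((ZMod.isUnit_iff_coprime B A).1 (IsUnit.of_mul_eq_one (u : ZMod A) ?_)).symm
    exact_mod_cast (ZMod.intCast_eq_intCast_iff _ _ _).2 hu
  simp_rw [sum_range_eq_sum_zmod]
  rw [← Fintype.sum_prod_type']
  refine (Fintype.sum_equiv (ZMod.chineseRemainder hAB).symm.toEquiv _ _ fun ⟨a, c⟩ => ?_).symm
  rw [RingEquiv.toEquiv_eq_coe, EquivLike.coe_coe, ZMod.chineseRemainder_symm_apply hAB hu hv,
    ZMod.val_intCast]
  exact (hf _ _ (Int.mod_modEq _ _)).symm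

lemma sum_sum_range_mul_eq_sum_crt {M : Type*} [AddCommMonoid M] {A B : ℕ} [NeZero A] [NeZero B]
    {u v : ℤ} (hu : B * u ≡ 1 [ZMOD A]) (hv : A * v ≡ 1 [ZMOD B]) {f : ℤ → ℤ → M}
    (hf : ∀ x x' y y', x ≡ x' [ZMOD (A * B : ℕ)] → y ≡ y' [ZMOD (A * B : ℕ)] → f x y = f x' y') :
    ∑ x ∈ range (A * B), ∑ y ∈ range (A * B), f x y =
      ∑ a ∈ range A, ∑ c ∈ range B, ∑ b ∈ range A, ∑ d ∈ range B,
        f (B * u * a + A * v * c) (B * u * b + A * v * d) := by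
  rw [sum_range_mul_eq_sum_crt hu hv (fun x => ∑ y ∈ range (A * B), f x y)
    fun x x' hx => sum_congr rfl fun y _ => hf x x' y y hx rfl]
  refine sum_congr rfl fun a _ => sum_congr rfl fun c _ => ?_
  exact sum_range_mul_eq_sum_crt hu hv _ fun y y' hy => hf _ _ y y' rfl hy

lemma lamTerm_crt {q1' q1'' q2' q2'' : ℕ} (hco1 : q1'.Coprime q1'') (hco2 : q2'.Coprime q2'')
    (hA : q1' * q2' ≠ 0) (hB : q1'' * q2'' ≠ 0) {m n u v : ℤ}
    (hu : ((q1'' * q2'' : ℕ) : ℤ) * u ≡ 1 [ZMOD ((q1' * q2' : ℕ) : ℤ)])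
    (hv : ((q1' * q2' : ℕ) : ℤ) * v ≡ 1 [ZMOD ((q1'' * q2'' : ℕ) : ℤ)]) (a b c d : ℤ) :
    lamTerm (q1' * q1'') (q2' * q2'') m n
        ((q1'' * q2'' : ℕ) * u * a + (q1' * q2' : ℕ) * v * c)
        ((q1'' * q2'' : ℕ) * u * b + (q1' * q2' : ℕ) * v * d) =
      lamTerm q1' q2' (m * u) (n * u) a b * lamTerm q1'' q2'' (m * v) (n * v) c d := by
  have hmodA (k : ℤ) := (((crt_modEq_left (v := v) hu a c).pow 2).add
    ((crt_modEq_left (v := v) hu b d).pow 2)).add_right k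
  have hmodB (k : ℤ) := (((crt_modEq_right (u := u) hv a c).pow 2).add
    ((crt_modEq_right (u := u) hv b d).pow 2)).add_right k
  have hdvd {p q : ℕ} : (p : ℤ) ∣ ((p * q : ℕ) : ℤ) ∧ (q : ℤ) ∣ ((p * q : ℕ) : ℤ) :=
    ⟨Int.natCast_dvd_natCast.2 (dvd_mul_right p q), Int.natCast_dvd_natCast.2 (dvd_mul_left q p)⟩
  rw [lamTerm, lamTerm, lamTerm, ite_zero_mul_ite_zero, ← e_add]
  congr 1
  · rw [hco1.natCast_mul_dvd_iff, hco2.natCast_mul_dvd_iff, ((hmodA 1).of_dvd hdvd.1).dvd_iff,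
      ((hmodA 2).of_dvd hdvd.2).dvd_iff, ((hmodB 1).of_dvd hdvd.1).dvd_iff,
      ((hmodB 2).of_dvd hdvd.2).dvd_iff, and_and_and_comm]
  · obtain ⟨hq1', hq2'⟩ := mul_ne_zero_iff.1 hA
    obtain ⟨hq1'', hq2''⟩ := mul_ne_zero_iff.1 hB
    congr 1
    push_cast
    field_simp
    ring

theorem lam_multiplicative_general (q1' q1'' q2' q2'' : ℕ)
    (h1 : 0 < q1') (h2 : 0 < q1'') (h3 : 0 < q2') (h4 : 0 < q2'')
    (hco1 : Nat.Coprime q1' q1'') (hco2 : Nat.Coprime q2' q2'')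
    (m n u v : ℤ)
    (hu : ((q1'' * q2'' : ℕ) : ℤ) * u ≡ 1 [ZMOD ((q1' * q2' : ℕ) : ℤ)])
    (hv : ((q1' * q2' : ℕ) : ℤ) * v ≡ 1 [ZMOD ((q1'' * q2'' : ℕ) : ℤ)]) :
    lam (q1' * q1'') (q2' * q2'') m n =
      lam q1' q2' (m * u) (n * u) * lam q1'' q2'' (m * v) (n * v) := by
  have : NeZero (q1' * q2') := ⟨by positivity⟩
  have : NeZero (q1'' * q2'') := ⟨by positivity⟩
  have hQ : q1' * q1'' * (q2' * q2'') = q1' * q2' * (q1'' * q2'') := by ring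
  have hper : ∀ x x' y y', x ≡ x' [ZMOD (q1' * q2' * (q1'' * q2'') : ℕ)] →
      y ≡ y' [ZMOD (q1' * q2' * (q1'' * q2'') : ℕ)] →
      lamTerm (q1' * q1'') (q2' * q2'') m n x y = lamTerm (q1' * q1'') (q2' * q2'') m n x' y' := by
    rw [← hQ]
    exact fun _ _ _ _ => lamTerm_congr m n
  simp only [lam_eq_sum_range, hQ]
  rw [sum_sum_range_mul_eq_sum_crt hu hv hper]
  simp_rw [lamTerm_crt hco1 hco2 (NeZero.ne _) (NeZero.ne _) hu hv, sum_mul_sum]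

theorem lam_multiplicative (q1' q1'' q2' q2'' : ℕ)
    (h1 : 0 < q1') (h2 : 0 < q1'') (h3 : 0 < q2') (h4 : 0 < q2'')
    (hco : Nat.Coprime (q1' * q1'') (q2' * q2''))
    (hco1 : Nat.Coprime q1' q1'') (hco2 : Nat.Coprime q2' q2'')
    (m n u v : ℤ)
    (hu : ((q1'' * q2'' : ℕ) : ℤ) * u ≡ 1 [ZMOD ((q1' * q2' : ℕ) : ℤ)])
    (hv : ((q1' * q2' : ℕ) : ℤ) * v ≡ 1 [ZMOD ((q1'' * q2'' : ℕ) : ℤ)]) :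
    lam (q1' * q1'') (q2' * q2'') m n =
      lam q1' q2' (m * u) (n * u) * lam q1'' q2'' (m * v) (n * v) :=
  lam_multiplicative_general q1' q1'' q2' q2'' h1 h2 h3 h4 hco1 hco2 m n u v hu hv
end

section
/- There exist infinitely many pairs of positive integers (x, y) such that both x^2 + y^2 + 1 and x^2 + y^2 + 2 are square-free. -/
/-!
Take `x = 210 s` and `y = 1`, so that the two numbers are `210² s² + 2` and `210² s² + 3`.
No prime dividing `210` has its square dividing either of them. For any other prime `p`,
`p² ∣ 210² s² + c` confines `s` to at most two residue classes modulo `p²`, since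
`p² ∣ 210² (s - t) (s + t)` and `p` cannot divide both factors. Such primes are at least
`11` and at most `O(s)`, so among `s ≤ S` at most
`4 ∑_{p ≥ 11} (S / p² + 1) ≤ 8S/11 + 4 π(O(S))` values are lost, and Chebyshev's bound
`π(n) = o(n)` leaves a positive proportion of good `s`.
-/

open Finset Filter Real

lemma Prime.sq_dvd_sub_or_sq_dvd_add {p A c s t : ℤ} (hp : Prime p) (hpA : ¬ p ∣ 2 * A)
    (hc : ¬ p ^ 2 ∣ c) (hs : p ^ 2 ∣ A * s ^ 2 + c) (ht : p ^ 2 ∣ A * t ^ 2 + c) :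
    p ^ 2 ∣ s - t ∨ p ^ 2 ∣ s + t := by
  have hps : ¬ p ∣ s := fun h ↦
    hc <| (dvd_add_right ((pow_dvd_pow_of_dvd h 2).mul_left A)).mp hs
  have hprod : p ^ 2 ∣ (s - t) * (s + t) := by
    refine hp.pow_dvd_of_dvd_mul_left 2 (fun h ↦ hpA (h.mul_left 2)) ?_
    convert dvd_sub hs ht using 1
    ring
  by_cases hadd : p ∣ s + t
  · refine .inr (hp.pow_dvd_of_dvd_mul_left 2 (fun hsub ↦ ?_) hprod)
    have h2s : p ∣ 2 * s := by
      rw [show 2 * s = (s - t) + (s + t) by ring]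
      exact dvd_add hsub hadd
    exact (hp.dvd_or_dvd h2s).elim (fun h2 ↦ hpA (h2.mul_right A)) hps
  · exact .inl (hp.pow_dvd_of_dvd_mul_right 2 hadd hprod)

lemma card_le_div_add_one_of_modEq {T : Finset ℕ} {S n : ℕ} (hS : ∀ s ∈ T, s ≤ S)
    (hn : ∀ s ∈ T, ∀ t ∈ T, s ≡ t [MOD n]) : #T ≤ S / n + 1 := by
  calc #T ≤ #(range (S / n + 1)) := by
        refine card_le_card_of_injOn (· / n) (fun s hs ↦ ?_) (fun s hs t ht hst ↦ ?_)
        · simpa [Nat.lt_succ_iff] using Nat.div_le_div_right (c := n) (hS s hs)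
        · have hst : s / n = t / n := hst
          rw [← Nat.div_add_mod s n, ← Nat.div_add_mod t n, hst, (hn s hs t ht : s % n = t % n)]
    _ = S / n + 1 := card_range _

lemma card_filter_sq_dvd_le {p A c : ℕ} (hp : p.Prime) (hpA : ¬ p ∣ 2 * A)
    (hc : ¬ p ^ 2 ∣ c) (S : ℕ) :
    #{s ∈ Icc 1 S | p ^ 2 ∣ A * s ^ 2 + c} ≤ 2 * (S / p ^ 2 + 1) := by
  set T := {s ∈ Icc 1 S | p ^ 2 ∣ A * s ^ 2 + c}
  obtain hT | ⟨s₀, hs₀⟩ := T.eq_empty_or_nonempty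
  · simp [hT]
  have hdvd (s) (hs : s ∈ T) : (p : ℤ) ^ 2 ∣ A * s ^ 2 + c := by
    exact_mod_cast (mem_filter.mp hs).2
  set T₁ := {s ∈ T | (p : ℤ) ^ 2 ∣ ((s : ℕ) : ℤ) - s₀}
  set T₂ := {s ∈ T | (p : ℤ) ^ 2 ∣ ((s : ℕ) : ℤ) + s₀}
  have hsplit : T ⊆ T₁ ∪ T₂ := fun s hs ↦ by
    simpa [T₁, T₂, hs] using (Nat.prime_iff_prime_int.mp hp).sq_dvd_sub_or_sq_dvd_add
      (by exact_mod_cast hpA) (by exact_mod_cast hc) (hdvd s hs) (hdvd s₀ hs₀)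
  have hle (s) (hs : s ∈ T) : s ≤ S := (mem_Icc.mp (mem_filter.mp hs).1).2
  calc #T ≤ #T₁ + #T₂ := (card_le_card hsplit).trans (card_union_le _ _)
    _ ≤ (S / p ^ 2 + 1) + (S / p ^ 2 + 1) := by
      gcongr <;> refine card_le_div_add_one_of_modEq (fun s hs ↦ hle s (mem_filter.mp hs).1)
        fun s hs t ht ↦ Nat.modEq_iff_dvd.mpr ?_ <;> push_cast <;>
        simpa using dvd_sub (mem_filter.mp ht).2 (mem_filter.mp hs).2
    _ = 2 * (S / p ^ 2 + 1) := by ring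

lemma exists_prime_sq_dvd_of_not_squarefree_sq_mul_add {m c s : ℕ} (hc : Squarefree c)
    (h : ¬ Squarefree (m ^ 2 * s ^ 2 + c)) :
    ∃ p, p.Prime ∧ ¬ p ∣ m ∧ p ≤ m * s + c ∧ p ^ 2 ∣ m ^ 2 * s ^ 2 + c := by
  obtain ⟨p, hp, hpp⟩ : ∃ p, p.Prime ∧ p * p ∣ m ^ 2 * s ^ 2 + c := by
    simpa [Nat.squarefree_iff_prime_squarefree] using h
  have hpc : ¬ p * p ∣ c := Nat.squarefree_iff_prime_squarefree.mp hc p hp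
  refine ⟨p, hp, fun hpm ↦ hpc ((Nat.dvd_add_right ?_).mp hpp), ?_, by rwa [sq]⟩
  · exact (mul_dvd_mul hpm hpm).trans ⟨s ^ 2, by ring⟩
  · have hc0 : 0 < c := Nat.pos_of_ne_zero hc.ne_zero
    refine Nat.mul_self_le_mul_self_iff.mp ((Nat.le_of_dvd (by positivity) hpp).trans ?_)
    nlinarith [Nat.le_mul_self c, Nat.zero_le (m * s * c)]

lemma card_filter_not_squarefree_le {m c K : ℕ} (hm : 2 ∣ m) (hc : Squarefree c)
    (hK : m + c ≤ K) (S : ℕ) :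
    #{s ∈ Icc 1 S | ¬ Squarefree (m ^ 2 * s ^ 2 + c)} ≤
      ∑ p ∈ Nat.primesLE (K * S) with ¬ p ∣ m, 2 * (S / p ^ 2 + 1) := by
  calc _ ≤ #(({p ∈ Nat.primesLE (K * S) | ¬ p ∣ m}).biUnion
        fun p ↦ {s ∈ Icc 1 S | p ^ 2 ∣ m ^ 2 * s ^ 2 + c}) := by
        refine card_le_card fun s hs ↦ ?_
        obtain ⟨hs, hsf⟩ := mem_filter.mp hs
        obtain ⟨p, hp, hpm, hple, hdvd⟩ :=
          exists_prime_sq_dvd_of_not_squarefree_sq_mul_add hc hsf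
        have := mem_Icc.mp hs
        simp only [mem_biUnion, mem_filter, Nat.mem_primesLE]
        exact ⟨p, ⟨⟨hple.trans (by nlinarith), hp⟩, hpm⟩, hs, hdvd⟩
    _ ≤ _ := card_biUnion_le.trans (sum_le_sum fun p hp ↦ ?_)
  obtain ⟨hpP, hpm⟩ := mem_filter.mp hp
  have hp := Nat.prime_of_mem_primesLE hpP
  refine card_filter_sq_dvd_le hp (fun h ↦ ?_) (fun h ↦ ?_) S
  · rcases (Nat.Prime.dvd_mul hp).mp h with h2 | hpm2
    · exact hpm ((Nat.prime_dvd_prime_iff_eq hp Nat.prime_two).mp h2 ▸ hm)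
    · exact hpm (hp.dvd_of_dvd_pow hpm2)
  · exact Nat.squarefree_iff_prime_squarefree.mp hc p hp (by rwa [← sq])

lemma sum_inv_sq_le_of_forall_lt {P : Finset ℕ} {k : ℕ} (hP : ∀ p ∈ P, k < p) :
    ∑ p ∈ P, ((p : ℝ) ^ 2)⁻¹ ≤ 2 / (k + 1) := by
  refine le_trans (sum_le_sum_of_subset_of_nonneg (fun p hp ↦ ?_) fun _ _ _ ↦ by positivity)
    (sum_Ioo_inv_sq_le k (P.sup id + 1))
  exact mem_Ioo.mpr ⟨hP p hp, Nat.lt_succ_of_le (le_sup (f := id) hp)⟩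

lemma Nat.Prime.ten_lt_of_not_dvd {p m : ℕ} (hp : p.Prime) (hm : 210 ∣ m) (hpm : ¬ p ∣ m) :
    10 < p := by
  by_contra! h
  have h210 : 2 ∣ m ∧ 3 ∣ m ∧ 5 ∣ m ∧ 7 ∣ m :=
    ⟨dvd_trans (by norm_num) hm, dvd_trans (by norm_num) hm, dvd_trans (by norm_num) hm,
      dvd_trans (by norm_num) hm⟩
  interval_cases p <;> norm_num at hp <;> simp_all

lemma sum_two_mul_div_sq_add_one_le {P : Finset ℕ} (hP : ∀ p ∈ P, 10 < p) (S : ℕ) :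
    ((∑ p ∈ P, 2 * (S / p ^ 2 + 1) : ℕ) : ℝ) ≤ 4 / 11 * S + 2 * #P := by
  have hinv : ∑ p ∈ P, ((p : ℝ) ^ 2)⁻¹ ≤ 2 / 11 := by
    convert sum_inv_sq_le_of_forall_lt hP using 1; norm_num
  push_cast
  calc ∑ p ∈ P, 2 * (((S / p ^ 2 : ℕ) : ℝ) + 1)
      ≤ ∑ p ∈ P, 2 * ((S : ℝ) * ((p : ℝ) ^ 2)⁻¹ + 1) := by
        gcongr with p hp
        calc _ ≤ (S : ℝ) / ((p ^ 2 : ℕ) : ℝ) := Nat.cast_div_le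
          _ = _ := by push_cast; ring
    _ = 2 * S * ∑ p ∈ P, ((p : ℝ) ^ 2)⁻¹ + 2 * #P := by
        simp only [mul_add, mul_one, sum_add_distrib, sum_const, nsmul_eq_mul, mul_sum, mul_assoc,
          mul_comm (#P : ℝ)]
    _ ≤ 2 * S * (2 / 11) + 2 * #P := by gcongr
    _ = 4 / 11 * S + 2 * #P := by ring

lemma eventually_primeCounting_le_mul {ε : ℝ} (hε : 0 < ε) :
    ∀ᶠ n : ℕ in atTop, (Nat.primeCounting n : ℝ) ≤ ε * n := by
  have hlog : Tendsto (fun n : ℕ ↦ log n) atTop atTop :=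
    tendsto_log_atTop.comp tendsto_natCast_atTop_atTop
  filter_upwards [tendsto_natCast_atTop_atTop.eventually
      (Chebyshev.eventually_primeCounting_le one_pos),
    hlog.eventually_ge_atTop ((log 4 + 1) / ε), eventually_gt_atTop 1] with n hπ hn hn1
  have hlogpos : 0 < log n := log_pos (by exact_mod_cast hn1)
  rw [Nat.floor_natCast, le_div_iff₀ hlogpos] at hπ
  rw [div_le_iff₀ hε] at hn
  have : (0 : ℝ) ≤ n := n.cast_nonneg
  nlinarith

lemma Set.infinite_setOf_of_eventually_card_not_le {P : ℕ → Prop} [DecidablePred P] {δ : ℝ}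
    (hδ : δ < 1) (h : ∀ᶠ S : ℕ in atTop, #{s ∈ Finset.Icc 1 S | ¬ P s} ≤ δ * S) :
    {s | P s}.Infinite := by
  intro hfin
  have hlarge : ∀ᶠ S : ℕ in atTop, (#hfin.toFinset : ℝ) < (1 - δ) * S :=
    (tendsto_natCast_atTop_atTop.const_mul_atTop (sub_pos.mpr hδ)).eventually_gt_atTop _
  obtain ⟨S, hbad, hS⟩ := (h.and hlarge).exists
  have hgood : #{s ∈ Finset.Icc 1 S | P s} ≤ #hfin.toFinset :=
    Finset.card_le_card fun s hs ↦ hfin.mem_toFinset.mpr (mem_filter.mp hs).2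
  have hsplit := Finset.card_filter_add_card_filter_not (s := Finset.Icc 1 S) P
  rw [Nat.card_Icc, Nat.add_sub_cancel] at hsplit
  have : (#{s ∈ Finset.Icc 1 S | P s} : ℝ) + #{s ∈ Finset.Icc 1 S | ¬ P s} = S := by
    exact_mod_cast hsplit
  have : (#{s ∈ Finset.Icc 1 S | P s} : ℝ) ≤ #hfin.toFinset := by exact_mod_cast hgood
  linarith

lemma card_filter_not_squarefree_and_le {m c₁ c₂ : ℕ} (hm : 210 ∣ m)
    (hc₁ : Squarefree c₁) (hc₂ : Squarefree c₂) (S : ℕ) :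
    (#{s ∈ Icc 1 S | ¬ (Squarefree (m ^ 2 * s ^ 2 + c₁) ∧
      Squarefree (m ^ 2 * s ^ 2 + c₂))} : ℝ) ≤
      8 / 11 * S + 4 * Nat.primeCounting ((m + c₁ + c₂) * S) := by
  set P := {p ∈ Nat.primesLE ((m + c₁ + c₂) * S) | ¬ p ∣ m}
  have hm2 : 2 ∣ m := dvd_trans (by norm_num) hm
  have hbad : #{s ∈ Icc 1 S | ¬ (Squarefree (m ^ 2 * s ^ 2 + c₁) ∧
      Squarefree (m ^ 2 * s ^ 2 + c₂))} ≤ 2 * ∑ p ∈ P, 2 * (S / p ^ 2 + 1) := by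
    calc _ ≤ #{s ∈ Icc 1 S | ¬ Squarefree (m ^ 2 * s ^ 2 + c₁)} +
          #{s ∈ Icc 1 S | ¬ Squarefree (m ^ 2 * s ^ 2 + c₂)} := by
          simp only [not_and_or, filter_or]
          exact card_union_le _ _
      _ ≤ _ := add_le_add (card_filter_not_squarefree_le hm2 hc₁ (by omega) S)
          (card_filter_not_squarefree_le hm2 hc₂ (by omega) S)
      _ = _ := (two_mul _).symm
  have hsum := sum_two_mul_div_sq_add_one_le (P := P)
    (fun p hp ↦ (Nat.prime_of_mem_primesLE (mem_filter.mp hp).1).ten_lt_of_not_dvd hm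
      (mem_filter.mp hp).2) S
  have hP : (#P : ℝ) ≤ Nat.primeCounting ((m + c₁ + c₂) * S) := by
    exact_mod_cast (card_filter_le _ _).trans (Nat.primesLE_card_eq_primeCounting _).le
  calc _ ≤ 2 * ((∑ p ∈ P, 2 * (S / p ^ 2 + 1) : ℕ) : ℝ) := by exact_mod_cast hbad
    _ ≤ _ := by linarith

theorem infinite_setOf_squarefree_sq_mul_add {m c₁ c₂ : ℕ} (hm : 210 ∣ m)
    (hc₁ : Squarefree c₁) (hc₂ : Squarefree c₂) :
    {s : ℕ | Squarefree (m ^ 2 * s ^ 2 + c₁) ∧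
      Squarefree (m ^ 2 * s ^ 2 + c₂)}.Infinite := by
  set K := m + c₁ + c₂
  have hK : 0 < K := by have := hc₁.ne_zero; omega
  refine Set.infinite_setOf_of_eventually_card_not_le (δ := 9 / 11) (by norm_num) ?_
  filter_upwards [(tendsto_id.const_mul_atTop' hK).eventually
    (eventually_primeCounting_le_mul (ε := 1 / (44 * K)) (by positivity))] with S hπ
  have hπ' : (Nat.primeCounting (K * S) : ℝ) ≤ S / 44 := by
    calc _ ≤ 1 / (44 * K) * ((K * S : ℕ) : ℝ) := hπ
      _ = S / 44 := by push_cast; field_simp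
  linarith [card_filter_not_squarefree_and_le hm hc₁ hc₂ S]

theorem infinitely_many_consecutive_squarefree :
    {p : ℕ × ℕ | 0 < p.1 ∧ 0 < p.2 ∧
      Squarefree (p.1 ^ 2 + p.2 ^ 2 + 1) ∧ Squarefree (p.1 ^ 2 + p.2 ^ 2 + 2)}.Infinite := by
  have hs := (infinite_setOf_squarefree_sq_mul_add (m := 210) dvd_rfl
    Nat.prime_two.prime.squarefree Nat.prime_three.prime.squarefree).sdiff (Set.finite_singleton 0)
  have hinj : Function.Injective fun s : ℕ ↦ (210 * s, 1) := fun s t h ↦ by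
    simpa using congrArg Prod.fst h
  refine (hs.image hinj.injOn).mono ?_
  rintro _ ⟨s, ⟨⟨h₂, h₃⟩, hs0⟩, rfl⟩
  refine ⟨by simpa [Nat.pos_iff_ne_zero] using hs0, one_pos, ?_, ?_⟩
  · convert h₂ using 1; ring
  · convert h₃ using 1; ring
end
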